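/- The dualization map f ↦ Hom(f,F) from Hom(F^(β), F^(α)) to the continuous linear maps F^α → F^β is surjective: every continuous linear map g : F^α → F^β (F discrete, products with product topology, α, β countable) equals Hom(f,F) for some linear map f : F^(β) → F^(α). -/

import Mathlib

/-!
A continuous functional on `F^α` has open kernel, and a neighbourhood of `0` in the product
topology contains all vectors vanishing on some finite set of coordinates. So each coordinate
`y ↦ g y j` only sees finitely many coordinates of `y`, i.e. it is `y ↦ ∑ i, c j i * y i` for some
finitely supported `c j`; then `f = linearCombination F c` is the required predual of `g`.
-/

open Finsupp

section

variable {R : Type*} {α : Type*}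

theorem finsum_mul_eq_linearCombination [CommSemiring R] (c : α →₀ R) (y : α → R) :
    ∑ᶠ i, c i * y i = linearCombination R y c := by
  rw [linearCombination_apply, Finsupp.sum, finsum_eq_sum_of_support_subset]
  · rfl
  · intro i hi
    simp only [Function.mem_support, Finset.mem_coe, Finsupp.mem_support_iff] at hi ⊢
    exact left_ne_zero_of_mul hi

theorem exists_finset_forall_eq_zero_of_continuous [Semiring R] [TopologicalSpace R]
    {M : Type*} [AddCommMonoid M] [Module R M] [TopologicalSpace M] [DiscreteTopology M]
    (φ : (α → R) →ₗ[R] M) (hφ : Continuous φ) :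
    ∃ s : Finset α, ∀ y : α → R, (∀ i ∈ s, y i = 0) → φ y = 0 := by
  have h0 : φ ⁻¹' {0} ∈ nhds (0 : α → R) := hφ.continuousAt.preimage_mem_nhds (by simp)
  rw [nhds_pi, Filter.mem_pi] at h0
  obtain ⟨I, hI, V, hV, hsub⟩ := h0
  refine ⟨hI.toFinset, fun y hy => hsub fun i hi => ?_⟩
  rw [hy i (hI.mem_toFinset.mpr hi)]
  exact mem_of_mem_nhds (hV i)

theorem exists_eq_linearCombination_of_continuous [CommRing R] [TopologicalSpace R]
    [DiscreteTopology R] (φ : (α → R) →ₗ[R] R) (hφ : Continuous φ) :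
    ∃ c : α →₀ R, ∀ y : α → R, φ y = linearCombination R y c := by
  classical
  obtain ⟨s, hs⟩ := exists_finset_forall_eq_zero_of_continuous φ hφ
  refine ⟨∑ i ∈ s, single i (φ (Pi.single i 1)), fun y => ?_⟩
  have hy : φ y = φ (∑ i ∈ s, Pi.single i (y i)) := by
    rw [← sub_eq_zero, ← map_sub]
    refine hs _ fun i hi => ?_
    simp [Finset.sum_pi_single, hi]
  rw [hy, map_sum, map_sum]
  refine Finset.sum_congr rfl fun i _ => ?_
  rw [linearCombination_single, smul_eq_mul, mul_comm, ← smul_eq_mul, ← map_smul,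
    ← Pi.single_smul, smul_eq_mul, mul_one]

end

theorem stmt_15_general (F : Type*) [Field F] [TopologicalSpace F] [DiscreteTopology F]
    (α β : Type*)
    (g : (α → F) →ₗ[F] (β → F)) (hg : Continuous g) :
    ∃ f : (β →₀ F) →ₗ[F] (α →₀ F),
      ∀ (x : β →₀ F) (y : α → F),
        ∑ᶠ i, f x i * y i = ∑ᶠ j, x j * g y j := by
  choose c hc using fun j => exists_eq_linearCombination_of_continuous
    ((LinearMap.proj j).comp g) ((continuous_apply j).comp hg)
  refine ⟨linearCombination F c, fun x y => ?_⟩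
  rw [finsum_mul_eq_linearCombination, finsum_mul_eq_linearCombination,
    linearCombination_linearCombination]
  congr 2
  funext j
  exact (hc j y).symm

theorem stmt_15 (F : Type*) [Field F] [TopologicalSpace F] [DiscreteTopology F]
    (α β : Type*) [Countable α] [Countable β]
    (g : (α → F) →ₗ[F] (β → F)) (hg : Continuous g) :
    ∃ f : (β →₀ F) →ₗ[F] (α →₀ F),
      ∀ (x : β →₀ F) (y : α → F),
        ∑ᶠ i, f x i * y i = ∑ᶠ j, x j * g y j :=
  stmt_15_general F α β g hg
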